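/- arXiv:1005.2802 — 5 statements merged into one kernel-verified Lean document; each statement's English description precedes it below -/
import Mathlib

section
/- Let Q be a ccc preorder and let P be a preorder in which every increasing ω-sequence r₀ ≤ r₁ ≤ r₂ ≤ ⋯ has an upper bound. Suppose R : Q → P → Prop satisfies: (i) if q ≤ q' and R(q,r) then R(q',r); (ii) if R(q,r) and r ≤ r' then R(q,r'); (iii) if every q' ≥ q has an extension q'' ≥ q' with R(q'',r), then R(q,r); (iv) for every q ∈ Q and r ∈ P there exist q' ≥ q and r' ≥ r with R(q',r'). Then for every r ∈ P there exists r' ∈ P with r ≤ r' such that R(q,r') holds for every q ∈ Q. -/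
/-!
By Zorn, take a maximal set `M` of pairs `(q, r_q)` with `r ≤ r_q` and `R q r_q`, whose `q`'s are
pairwise incompatible and whose `r_q`'s are pairwise comparable. The ccc makes `M` countable, so
its `P`-parts form a countable chain, which has an upper bound `b` because increasing ω-sequences
do. By (iv) and maximality every `q` is compatible with some `q₀` from `M`; since `R q₀ b` by
(ii), (i) and (iii) give `R q b`.
-/

section

variable {Q P : Type*} [Preorder Q] [Preorder P]

def Compatible (x y : Q) : Prop := ∃ z, x ≤ z ∧ y ≤ z

theorem Compatible.refl (x : Q) : Compatible x x := ⟨x, le_rfl, le_rfl⟩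

theorem Compatible.of_le_left {x x' y : Q} (hx : x ≤ x') (h : Compatible x' y) :
    Compatible x y :=
  let ⟨z, hx'z, hyz⟩ := h
  ⟨z, hx.trans hx'z, hyz⟩

theorem Set.Pairwise.countable_of_incompatible {α : Type*}
    (hccc : ∀ S : Set Q, S.Pairwise (fun x y => ¬Compatible x y) → S.Countable)
    {f : α → Q} {S : Set α} (hS : S.Pairwise fun a b => ¬Compatible (f a) (f b)) :
    S.Countable := by
  have hinj : S.InjOn f := fun a ha b hb hab =>
    hS.eq ha hb fun h => h (hab ▸ Compatible.refl (f a))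
  exact (Set.mapsTo_image f S).countable_of_injOn hinj (hccc _ (hinj.pairwise_image.mpr hS))

theorem exists_forall_le_of_countable_directedOn
    (hP : ∀ f : ℕ → P, (∀ n, f n ≤ f (n + 1)) → ∃ b, ∀ n, f n ≤ b)
    {T : Set P} (hT : T.Countable) (hne : T.Nonempty) (hdir : DirectedOn (· ≤ ·) T) :
    ∃ b, ∀ x ∈ T, x ≤ b := by
  have : Encodable T := hT.toEncodable
  have : Inhabited T := ⟨⟨_, hne.some_mem⟩⟩
  have hd : Directed (· ≤ ·) (Subtype.val : T → P) := directedOn_iff_directed.mp hdir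
  obtain ⟨b, hb⟩ := hP (fun n => (hd.sequence Subtype.val n).1) hd.sequence_mono_nat
  exact ⟨b, fun x hx => (hd.rel_sequence ⟨x, hx⟩).trans (hb _)⟩

theorem exists_maximal_pairwise_subset {α : Type*} (G : Set α) (r : α → α → Prop) :
    ∃ M, Maximal (fun S => S ⊆ G ∧ S.Pairwise r) M := by
  refine zorn_subset _ fun c hcS hc => ⟨⋃₀ c, ⟨?_, ?_⟩, fun s => Set.subset_sUnion_of_mem⟩
  · exact Set.sUnion_subset fun s hs => (hcS hs).1
  · exact (Set.pairwise_sUnion hc.directedOn).mpr fun s hs => (hcS hs).2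

theorem Compatible.symm {x y : Q} (h : Compatible x y) : Compatible y x :=
  let ⟨z, hxz, hyz⟩ := h
  ⟨z, hyz, hxz⟩

def Coherent (p p' : Q × P) : Prop := ¬Compatible p.1 p'.1 ∧ (p.2 ≤ p'.2 ∨ p'.2 ≤ p.2)

theorem Set.Pairwise.exists_upperBound_of_coherent
    (hccc : ∀ S : Set Q, S.Pairwise (fun x y => ¬Compatible x y) → S.Countable)
    (hP : ∀ f : ℕ → P, (∀ n, f n ≤ f (n + 1)) → ∃ b, ∀ n, f n ≤ b)
    {M : Set (Q × P)} (hM : M.Pairwise Coherent) {r : P} (hr : ∀ p ∈ M, r ≤ p.2) :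
    ∃ b, r ≤ b ∧ ∀ p ∈ M, p.2 ≤ b := by
  have hM_countable : M.Countable := (hM.imp fun _ _ h => h.1).countable_of_incompatible hccc
  have hchain : IsChain (· ≤ ·) (insert r (Prod.snd '' M)) :=
    (IsChain.image_of_map_rel (fun p p' : Q × P => p.2 ≤ p'.2) _ Prod.snd (fun _ _ => id)
      (hM.imp fun _ _ h => h.2)).insert fun _ ⟨p, hp, hpx⟩ _ => Or.inl (hpx ▸ hr p hp)
  obtain ⟨b, hb⟩ := exists_forall_le_of_countable_directedOn hP
    ((hM_countable.image _).insert r) (Set.insert_nonempty _ _) hchain.directedOn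
  exact ⟨b, hb r (Set.mem_insert _ _),
    fun p hp => hb _ (Set.mem_insert_of_mem _ (Set.mem_image_of_mem _ hp))⟩

theorem Maximal.exists_compatible_of_coherent {G M : Set (Q × P)}
    (hM : Maximal (fun S => S ⊆ G ∧ S.Pairwise Coherent) M) {b : P} (hb : ∀ p ∈ M, p.2 ≤ b)
    (hG : ∀ q, ∃ p ∈ G, q ≤ p.1 ∧ b ≤ p.2) (q : Q) : ∃ p ∈ M, Compatible q p.1 := by
  by_contra! hq
  obtain ⟨p, hpG, hqp, hbp⟩ := hG q
  have hp_incompatible : ∀ p' ∈ M, ¬Compatible p.1 p'.1 := fun p' hp' h =>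
    hq p' hp' (h.of_le_left hqp)
  have hpM : p ∈ M := hM.mem_of_prop_insert ⟨Set.insert_subset hpG hM.prop.1,
    hM.prop.2.insert fun p' hp' _ =>
      ⟨⟨hp_incompatible p' hp', Or.inr ((hb p' hp').trans hbp)⟩,
        ⟨fun h => hp_incompatible p' hp' h.symm, Or.inl ((hb p' hp').trans hbp)⟩⟩⟩
  exact hp_incompatible p hpM (Compatible.refl _)

end

/-- Forcing-free core (*) of Claim 3.1: if `Q` is a ccc preorder, `P` is a preorder
in which every increasing ω-sequence has an upper bound, and `R : Q → P → Prop`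
satisfies the standard properties of the relation “`q` forces `r ∈ ℐ`”, then every
`r ∈ P` has an extension `r'` with `R q r'` for all `q`. -/
theorem stmt0 {Q P : Type*} [Preorder Q] [Preorder P]
    (hccc : ∀ S : Set Q,
      (∀ x ∈ S, ∀ y ∈ S, x ≠ y → ¬∃ z, x ≤ z ∧ y ≤ z) → S.Countable)
    (hP : ∀ f : ℕ → P, (∀ n, f n ≤ f (n + 1)) → ∃ b, ∀ n, f n ≤ b)
    (R : Q → P → Prop)
    (h1 : ∀ q q' r, q ≤ q' → R q r → R q' r)
    (h2 : ∀ q r r', R q r → r ≤ r' → R q r')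
    (h3 : ∀ q r, (∀ q', q ≤ q' → ∃ q'', q' ≤ q'' ∧ R q'' r) → R q r)
    (h4 : ∀ q r, ∃ q' r', q ≤ q' ∧ r ≤ r' ∧ R q' r') :
    ∀ r : P, ∃ r' : P, r ≤ r' ∧ ∀ q : Q, R q r' := by
  intro r
  obtain ⟨M, hM⟩ := exists_maximal_pairwise_subset {p : Q × P | r ≤ p.2 ∧ R p.1 p.2} Coherent
  have hMG := hM.prop.1
  obtain ⟨b, hrb, hMb⟩ := hM.prop.2.exists_upperBound_of_coherent
    hccc hP fun p hp => (hMG hp).1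
  have hM_predense := hM.exists_compatible_of_coherent hMb fun q => by
    obtain ⟨q', r', hqq', hbr', hR⟩ := h4 q b
    exact ⟨(q', r'), ⟨hrb.trans hbr', hR⟩, hqq', hbr'⟩
  refine ⟨b, hrb, fun q => h3 q b fun q' _ => ?_⟩
  obtain ⟨p, hpM, z, hq'z, hpz⟩ := hM_predense q'
  exact ⟨z, hq'z, h1 _ _ _ hpz (h2 _ _ _ (hMG hpM).2 (hMb p hpM))⟩
end

section
/- Let Q be a ccc preorder and let P be the collection of all infinite subsets of ℕ, preordered by A ≤ B iff B ⊆* A (i.e. B ∖ A is finite). Suppose R : Q → P → Prop satisfies: (i) if q ≤ q' and R(q,A) then R(q',A); (ii) if R(q,A), B is infinite and B ⊆* A, then R(q,B); (iii) if every q' ≥ q has an extension q'' ≥ q' with R(q'',A), then R(q,A); (iv) for every q ∈ Q and every infinite A ⊆ ℕ there exist q' ≥ q and an infinite B ⊆* A with R(q',B). Then for every infinite A ⊆ ℕ there exists an infinite B ⊆ ℕ with B ∖ A finite such that R(q,B) holds for every q ∈ Q. -/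
/-!
Call `(q, B)` a witness when `B ⊆* A` is infinite and `R q B`. By Zorn there is a maximal
family of witnesses whose conditions are pairwise incompatible and whose sets are pairwise
`⊆*`-comparable. The ccc makes it countable, so its sets together with `A` have an infinite
pseudo-intersection `B`. By (iv) and maximality every `q` is compatible with a condition `q₀`
of the family; (ii) gives `R q₀ B`, (i) carries it to a common extension, and (iii) yields `R q B`.
-/

open Set

theorem Set.Finite.diff_trans {α : Type*} {X Y Z : Set α} (hXY : (X \ Y).Finite)
    (hYZ : (Y \ Z).Finite) : (X \ Z).Finite :=
  (hXY.union hYZ).subset (sdiff_triangle X Y Z)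

theorem Directed.infinite_biInter_of_almostSubset {α ι : Type*} [Nonempty ι] {f : ι → Set α}
    (hinf : ∀ i, (f i).Infinite) (hdir : Directed (fun X Y => (Y \ X).Finite) f)
    (s : Finset ι) : (⋂ i ∈ s, f i).Infinite := by
  have : IsTrans (Set α) (fun X Y => (Y \ X).Finite) := ⟨fun _ _ _ h₁ h₂ => h₂.diff_trans h₁⟩
  obtain ⟨k, hk⟩ := hdir.finset_le s
  have hfin : (f k \ ⋂ i ∈ s, f i).Finite := by
    simp only [sdiff_iInter]
    exact s.finite_toSet.biUnion hk
  have hinter := (hinf k).sdiff hfin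
  rw [sdiff_sdiff_right_self] at hinter
  exact hinter.mono inter_subset_right

theorem exists_infinite_pseudoIntersection_of_finite_inter {f : ℕ → Set ℕ}
    (hf : ∀ s : Finset ℕ, (⋂ i ∈ s, f i).Infinite) :
    ∃ B : Set ℕ, B.Infinite ∧ ∀ n, (B \ f n).Finite := by
  choose x hx hlt using fun n => (hf (Finset.Iic n)).exists_gt n
  refine ⟨range x, infinite_of_forall_exists_gt fun n => ⟨x n, mem_range_self n, hlt n⟩,
    fun n => ((finite_Iio n).image x).subset ?_⟩
  rintro _ ⟨⟨m, rfl⟩, hm⟩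
  refine ⟨m, mem_Iio.mpr (not_le.mp fun hnm => hm ?_), rfl⟩
  exact mem_iInter₂.mp (hx m) n (Finset.mem_Iic.mpr hnm)

theorem Set.Countable.exists_infinite_pseudoIntersection {𝒞 : Set (Set ℕ)} (hc : 𝒞.Countable)
    (hinf : ∀ X ∈ 𝒞, X.Infinite) (hchain : IsChain (fun X Y => (Y \ X).Finite) 𝒞) :
    ∃ B : Set ℕ, B.Infinite ∧ ∀ X ∈ 𝒞, (B \ X).Finite := by
  rcases 𝒞.eq_empty_or_nonempty with rfl | hne
  · exact ⟨univ, infinite_univ, fun _ h => h.elim⟩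
  obtain ⟨f, rfl⟩ := hc.exists_eq_range hne
  have : Std.Refl fun X Y : Set ℕ => (Y \ X).Finite := ⟨fun X => by simp⟩
  have hdir : Directed (fun X Y => (Y \ X).Finite) f := directedOn_range.mp hchain.directedOn
  obtain ⟨B, hB, hBf⟩ := exists_infinite_pseudoIntersection_of_finite_inter
    (hdir.infinite_biInter_of_almostSubset fun n => hinf _ (mem_range_self n))
  exact ⟨B, hB, forall_mem_range.mpr hBf⟩

section WitnessAntichain

variable {Q : Type*} [Preorder Q] (R : Q → Set ℕ → Prop) (A : Set ℕ)

structure IsWitnessAntichain (F : Set (Q × Set ℕ)) : Prop where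
  witness : ∀ p ∈ F, p.2.Infinite ∧ (p.2 \ A).Finite ∧ R p.1 p.2
  incompatible : F.Pairwise fun p p' => ¬∃ z, p.1 ≤ z ∧ p'.1 ≤ z
  almost_comparable : F.Pairwise fun p p' => (p.2 \ p'.2).Finite ∨ (p'.2 \ p.2).Finite

theorem exists_maximal_isWitnessAntichain :
    ∃ F, Maximal (fun F => IsWitnessAntichain R A F) F := by
  refine zorn_subset _ fun c hc hchain => ⟨⋃₀ c, ?_, fun _ => subset_sUnion_of_mem⟩
  have hdir : DirectedOn (· ⊆ ·) c := hchain.directedOn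
  exact
    { witness := fun p ⟨F, hF, hp⟩ => (hc hF).witness p hp
      incompatible := (pairwise_sUnion hdir).mpr fun F hF => (hc hF).incompatible
      almost_comparable := (pairwise_sUnion hdir).mpr fun F hF => (hc hF).almost_comparable }

variable {R A}

theorem IsWitnessAntichain.countable {F : Set (Q × Set ℕ)} (hF : IsWitnessAntichain R A F)
    (hccc : ∀ S : Set Q, (∀ x ∈ S, ∀ y ∈ S, x ≠ y → ¬∃ z, x ≤ z ∧ y ≤ z) → S.Countable) :
    F.Countable := by
  have hinj : InjOn Prod.fst F := fun p hp p' hp' h => by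
    by_contra hne
    exact hF.incompatible hp hp' hne ⟨p.1, le_rfl, h.ge⟩
  refine countable_of_injective_of_countable_image hinj (hccc _ ?_)
  rintro _ ⟨p, hp, rfl⟩ _ ⟨p', hp', rfl⟩ hne
  exact hF.incompatible hp hp' fun h => hne (congrArg Prod.fst h)

theorem IsWitnessAntichain.exists_pseudoIntersection {F : Set (Q × Set ℕ)}
    (hF : IsWitnessAntichain R A F) (hFc : F.Countable) (hA : A.Infinite) :
    ∃ B : Set ℕ, B.Infinite ∧ (B \ A).Finite ∧ ∀ p ∈ F, (B \ p.2).Finite := by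
  have hinf : ∀ X ∈ insert A (Prod.snd '' F), X.Infinite := by
    rintro X (rfl | ⟨p, hp, rfl⟩)
    exacts [hA, (hF.witness p hp).1]
  have hchain : IsChain (fun X Y => (Y \ X).Finite) (insert A (Prod.snd '' F)) := by
    rintro X (rfl | ⟨p, hp, rfl⟩) Y (rfl | ⟨p', hp', rfl⟩) hne
    · exact absurd rfl hne
    · exact .inl (hF.witness p' hp').2.1
    · exact .inr (hF.witness p hp).2.1
    · exact (hF.almost_comparable hp hp' fun h => hne (congrArg Prod.snd h)).symm
  obtain ⟨B, hB, hBsub⟩ := ((hFc.image Prod.snd).insert A).exists_infinite_pseudoIntersection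
    hinf hchain
  exact ⟨B, hB, hBsub A (mem_insert A _), fun p hp => hBsub p.2 (mem_insert_of_mem A ⟨p, hp, rfl⟩)⟩

theorem Maximal.exists_compatible_of_pseudoIntersection {F : Set (Q × Set ℕ)}
    (hF : Maximal (IsWitnessAntichain R A) F)
    (h4 : ∀ q : Q, ∀ A : Set ℕ, A.Infinite →
      ∃ q' : Q, ∃ B : Set ℕ, q ≤ q' ∧ B.Infinite ∧ (B \ A).Finite ∧ R q' B)
    {B : Set ℕ} (hB : B.Infinite) (hBA : (B \ A).Finite) (hBF : ∀ p ∈ F, (B \ p.2).Finite)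
    (q : Q) : ∃ p ∈ F, ∃ z, q ≤ z ∧ p.1 ≤ z := by
  by_contra! hq
  obtain ⟨q', B', hqq', hB', hB'B, hR⟩ := h4 q B hB
  have hq' : ∀ p ∈ F, ¬∃ z, q' ≤ z ∧ p.1 ≤ z := fun p hp ⟨z, hz, hpz⟩ =>
    hq p hp z (hqq'.trans hz) hpz
  have hins : IsWitnessAntichain R A (insert (q', B') F) :=
    { witness := by
        rintro p (rfl | hp)
        exacts [⟨hB', hB'B.diff_trans hBA, hR⟩, hF.1.witness p hp]
      incompatible := hF.1.incompatible.insert fun p hp _ =>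
        ⟨hq' p hp, fun ⟨z, hpz, hz⟩ => hq' p hp ⟨z, hz, hpz⟩⟩
      almost_comparable := hF.1.almost_comparable.insert fun p hp _ =>
        ⟨.inl (hB'B.diff_trans (hBF p hp)), .inr (hB'B.diff_trans (hBF p hp))⟩ }
  exact hq (q', B') (hF.2 hins (subset_insert _ F) (mem_insert _ F)) q' hqq' le_rfl

end WitnessAntichain

/-- Core (*) of Claim 3.1 instantiated at `ℙ_{𝒜*[V]}`: the preorder of infinite
subsets of `ℕ` ordered by `A ≤ B ↔ B ⊆* A` (reverse almost-inclusion).  If `Q` is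
ccc and `R : Q → (infinite subsets of ℕ) → Prop` has the standard properties of the
relation “`q` forces `A ∈ ℐ`”, then every infinite `A ⊆ ℕ` has an infinite
`B ⊆* A` with `R q B` for all `q`. -/
theorem stmt1 {Q : Type*} [Preorder Q]
    (hccc : ∀ S : Set Q,
      (∀ x ∈ S, ∀ y ∈ S, x ≠ y → ¬∃ z, x ≤ z ∧ y ≤ z) → S.Countable)
    (R : Q → Set ℕ → Prop)
    (h1 : ∀ q q' : Q, ∀ A : Set ℕ, q ≤ q' → R q A → R q' A)
    (h2 : ∀ q : Q, ∀ A B : Set ℕ, R q A → B.Infinite → (B \ A).Finite → R q B)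
    (h3 : ∀ q : Q, ∀ A : Set ℕ, A.Infinite →
      (∀ q', q ≤ q' → ∃ q'', q' ≤ q'' ∧ R q'' A) → R q A)
    (h4 : ∀ q : Q, ∀ A : Set ℕ, A.Infinite →
      ∃ q' : Q, ∃ B : Set ℕ, q ≤ q' ∧ B.Infinite ∧ (B \ A).Finite ∧ R q' B) :
    ∀ A : Set ℕ, A.Infinite →
      ∃ B : Set ℕ, B.Infinite ∧ (B \ A).Finite ∧ ∀ q : Q, R q B := by
  intro A hA
  obtain ⟨F, hF⟩ := exists_maximal_isWitnessAntichain R A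
  obtain ⟨B, hB, hBA, hBF⟩ := hF.1.exists_pseudoIntersection (hF.1.countable hccc) hA
  refine ⟨B, hB, hBA, fun q => h3 q B hB fun q' _ => ?_⟩
  obtain ⟨p, hp, z, hq'z, hpz⟩ := hF.exists_compatible_of_pseudoIntersection h4 hB hBA hBF q'
  exact ⟨z, hq'z, h1 p.1 z B hpz (h2 p.1 p.2 B (hF.1.witness p hp).2.2 hB (hBF p hp))⟩
end

section
/- Let (T, ≤) be a partial order in which every element has two upper bounds that are incomparable with each other. Let (b_i)_{i ∈ I} be a family of pairwise disjoint subsets of T such that for each i the downward closure {x ∈ T : ∃ y ∈ b_i, x ≤ y} is a chain. Let h : T → ℕ satisfy: whenever ρ < ν and h(ρ) = h(ν), there exists i ∈ I with ρ ∈ b_i and ν ∈ b_i. Then for every n ∈ ℕ the set ℐ_n := {ρ ∈ T : for all ν ≥ ρ, h(ν) ≠ n} is upward closed and dense in T (every element of T has an upper bound in ℐ_n), and the intersection of the sets ℐ_n over all n ∈ ℕ is empty. -/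
/-! If `ℐ_n` had no element above `t`, the value `n` would be taken cofinally above `t`: pick
`ν ≥ t` with `h ν = n`, two incomparable `y, z ≥ ν`, and elements above `y` and above `z` where
`h` is again `n`. Both pairs lie in a common `b i`, the same one by disjointness, so `y` and `z`
lie in the chain below `b i` and are comparable. Finally `ρ ∉ ℐ_{h ρ}`. -/

section

open Function

variable {T : Type*} [PartialOrder T] {I : Type*} {b : I → Set T} {h : T → ℕ}

lemma exists_mem_block_of_eq_of_lt (hdisj : Pairwise (Disjoint on b))
    (hh : ∀ ρ ν : T, ρ < ν → h ρ = h ν → ∃ i, ρ ∈ b i ∧ ν ∈ b i)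
    {ρ ν ν' : T} (hν : ρ < ν) (hν' : ρ < ν') (he : h ρ = h ν) (he' : h ρ = h ν') :
    ∃ i, ν ∈ b i ∧ ν' ∈ b i := by
  obtain ⟨i, hρi, hνi⟩ := hh ρ ν hν he
  obtain ⟨j, hρj, hν'j⟩ := hh ρ ν' hν' he'
  obtain rfl : i = j := by_contra fun hij => Set.disjoint_left.mp (hdisj hij) hρi hρj
  exact ⟨i, hνi, hν'j⟩

lemma le_total_of_le_mem {s : Set T} (hs : IsChain (· ≤ ·) {x | ∃ y ∈ s, x ≤ y})
    {y z ν ν' : T} (hν : ν ∈ s) (hν' : ν' ∈ s) (hy : y ≤ ν) (hz : z ≤ ν') :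
    y ≤ z ∨ z ≤ y :=
  hs.total ⟨ν, hν, hy⟩ ⟨ν', hν', hz⟩

lemma exists_le_forall_le_ne
    (hsplit : ∀ x : T, ∃ y z, x ≤ y ∧ x ≤ z ∧ ¬y ≤ z ∧ ¬z ≤ y)
    (hdisj : Pairwise (Disjoint on b))
    (hchain : ∀ i : I, IsChain (· ≤ ·) {x : T | ∃ y ∈ b i, x ≤ y})
    (hh : ∀ ρ ν : T, ρ < ν → h ρ = h ν → ∃ i, ρ ∈ b i ∧ ν ∈ b i) (n : ℕ) (t : T) :
    ∃ ρ, t ≤ ρ ∧ ∀ ν, ρ ≤ ν → h ν ≠ n := by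
  by_contra! hcofinal
  obtain ⟨ν, htν, hνn⟩ := hcofinal t le_rfl
  obtain ⟨y, z, hνy, hνz, hyz, hzy⟩ := hsplit ν
  obtain ⟨νy, hyνy, hνyn⟩ := hcofinal y (htν.trans hνy)
  obtain ⟨νz, hzνz, hνzn⟩ := hcofinal z (htν.trans hνz)
  have hν_lt_y : ν < y := hνy.lt_of_not_ge fun hyν => hyz (hyν.trans hνz)
  have hν_lt_z : ν < z := hνz.lt_of_not_ge fun hzν => hzy (hzν.trans hνy)
  obtain ⟨i, hνyi, hνzi⟩ := exists_mem_block_of_eq_of_lt hdisj hh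
    (hν_lt_y.trans_le hyνy) (hν_lt_z.trans_le hzνz) (hνn.trans hνyn.symm) (hνn.trans hνzn.symm)
  exact (le_total_of_le_mem (hchain i) hνyi hνzi hyνy hzνz).elim hyz hzy

end

/-- (*)₂ and part of (*)₃ in the proof of Claim 3.7: if every element of the
partial order `T` has two incomparable upper bounds, `(b i)` is a family of
pairwise disjoint subsets of `T` whose downward closures are chains, and
`h : T → ℕ` is one-to-one on `<`-related pairs except within some `b i`, then
each `ℐ_n = {ρ | ∀ ν ≥ ρ, h ν ≠ n}` is upward closed and dense, yet
`⋂ n, ℐ_n = ∅`. -/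
theorem stmt3 {T : Type*} [PartialOrder T] {I : Type*}
    (hsplit : ∀ x : T, ∃ y z, x ≤ y ∧ x ≤ z ∧ ¬y ≤ z ∧ ¬z ≤ y)
    (b : I → Set T)
    (hdisj : ∀ i j : I, i ≠ j → Disjoint (b i) (b j))
    (hchain : ∀ i : I, IsChain (· ≤ ·) {x : T | ∃ y ∈ b i, x ≤ y})
    (h : T → ℕ)
    (hh : ∀ ρ ν : T, ρ < ν → h ρ = h ν → ∃ i, ρ ∈ b i ∧ ν ∈ b i) :
    (∀ n : ℕ,
      (∀ ρ ∈ {ρ : T | ∀ ν, ρ ≤ ν → h ν ≠ n}, ∀ ν, ρ ≤ ν →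
        ν ∈ {ρ : T | ∀ ν, ρ ≤ ν → h ν ≠ n}) ∧
      (∀ t : T, ∃ ρ, t ≤ ρ ∧ ρ ∈ {ρ : T | ∀ ν, ρ ≤ ν → h ν ≠ n})) ∧
    (⋂ n : ℕ, {ρ : T | ∀ ν, ρ ≤ ν → h ν ≠ n}) = ∅ := by
  refine ⟨fun n => ⟨?_, exists_le_forall_le_ne hsplit hdisj hchain hh n⟩, ?_⟩
  · exact fun ρ hρ ν hρν μ hνμ => hρ μ (hρν.trans hνμ)
  · exact Set.iInter_eq_empty_iff.mpr fun ρ => ⟨h ρ, fun hρ => hρ ρ le_rfl rfl⟩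
end

section
/- Let (T, ≤) be a partial order whose strict order < is well-founded. For p ∈ T let suc(p) := {q ∈ T : p < q and there is no r with p < r < q}, and let L(p) := {(p₁, p₂) : p₁ < p₂ ≤ p and p₂ ∈ suc(p₁)}. Assume that for every p ∈ T the set suc(p) has cardinality 𝔠 = 2^{ℵ₀} and the set L(p) has cardinality strictly less than 𝔠. Let C be a type of cardinality 𝔠. Then there exists a function H assigning to each pair (p, q) with q ∈ suc(p) an element H(p, q) ∈ C such that for every p ∈ T, the map q ↦ H(p, q) is injective on suc(p) and its image equals C ∖ {H(p₁, p₂) : (p₁, p₂) ∈ L(p)}. -/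
/-- The set of immediate successors of `p`. -/
def sucSet {T : Type*} [PartialOrder T] (p : T) : Set T :=
  {q | p < q ∧ ¬∃ r, p < r ∧ r < q}

/-- The set of pairs `(p₁, p₂)` with `p₁ < p₂ ≤ p` and `p₂` an immediate
successor of `p₁`. -/
def LSet {T : Type*} [PartialOrder T] (p : T) : Set (T × T) :=
  {x | x.1 < x.2 ∧ x.2 ≤ p ∧ x.2 ∈ sucSet x.1}

/-!
The labels are assigned by well-founded recursion on the upper end `q` of an edge `p ⋖ q`:
every pair in `LSet p` has upper end `≤ p < q`, so its label is already fixed when the edges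
out of `p` are labelled. Fewer than `𝔠` labels are used below `p`, so their complement in `C`
still has size `𝔠 = #(sucSet p)`, and any bijection between the two will do.
-/

open Cardinal Set

universe u v

theorem WellFounded.exists_isFixedPt {α β : Type*} [LT α] [Nonempty β]
    (hwf : WellFounded ((· < ·) : α → α → Prop)) (F : (α → β) → α → β)
    (hF : ∀ f g a, (∀ b < a, f b = g b) → F f a = F g a) :
    ∃ f, Function.IsFixedPt F f := by
  classical
  let extend (a : α) (rec : ∀ b, b < a → β) (b : α) : β :=
    if h : b < a then rec b h else Classical.arbitrary β
  refine ⟨hwf.fix fun a rec => F (extend a rec) a, funext fun a => ?_⟩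
  rw [hwf.fix_eq]
  exact hF _ _ a fun b hb => by simp only [extend, dif_pos hb]

theorem Equiv.exists_bijOn {α β : Type*} [Nonempty β] {s : Set α} {t : Set β} (e : s ≃ t) :
    ∃ f : α → β, BijOn f s t := by
  classical
  refine ⟨fun a => if h : a ∈ s then e ⟨a, h⟩ else Classical.arbitrary β, ?_, ?_, ?_⟩
  · intro a ha
    simp only [dif_pos ha, Subtype.coe_prop]
  · intro a ha b hb hab
    simp only [dif_pos ha, dif_pos hb] at hab
    simpa using e.injective (Subtype.ext hab)
  · intro c hc
    obtain ⟨⟨a, ha⟩, hac⟩ := e.surjective ⟨c, hc⟩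
    exact ⟨a, ha, by simp [dif_pos ha, hac]⟩

theorem exists_bijOn_compl_of_mk_lt {α : Type u} {β : Type v} [Infinite β] {s : Set α}
    {t : Set β} (hs : lift.{v} #s = lift.{u} #β) (ht : #t < #β) :
    ∃ f : α → β, BijOn f s tᶜ := by
  have hcompl : #(tᶜ : Set β) = #β := mk_compl_of_infinite t ht
  obtain ⟨e⟩ : Nonempty (s ≃ (tᶜ : Set β)) := lift_mk_eq'.mp (by rw [hcompl, hs])
  exact e.exists_bijOn

theorem mk_image_lt_continuum {α : Type u} {β : Type v} (f : α → β) {s : Set α}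
    (hs : #s < 𝔠) : #(f '' s) < 𝔠 := by
  rw [← lift_lt_continuum.{v, u}]
  exact mk_image_le_lift.trans_lt (lift_lt_continuum.mpr hs)

theorem snd_lt_of_mem_LSet_of_mem_sucSet {T : Type*} [PartialOrder T] {p q : T} {x : T × T}
    (hx : x ∈ LSet p) (hq : q ∈ sucSet p) : x.2 < q :=
  hx.2.1.trans_lt hq.1

/-- Clause ⊡₃ of the proof of Theorem 2.4: in a well-founded partial order where
every node has continuum many immediate successors and fewer than continuum many
labeled pairs below it, one can label the immediate successor relation so that at
each node `p` the labels are one-to-one and exactly exhaust the complement of the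
labels already used below `p`. -/
theorem stmt6 {T C : Type*} [PartialOrder T]
    (hwf : WellFounded ((· < ·) : T → T → Prop))
    (hsuc : ∀ p : T, Cardinal.mk (sucSet p) = Cardinal.continuum)
    (hL : ∀ p : T, Cardinal.mk (LSet p) < Cardinal.continuum)
    (hC : Cardinal.mk C = Cardinal.continuum) :
    ∃ H : T → T → C, ∀ p : T,
      Set.InjOn (H p) (sucSet p) ∧
      H p '' sucSet p = {c : C | ¬∃ x ∈ LSet p, H x.1 x.2 = c} := by
  have : Infinite C := infinite_iff.mpr (hC ▸ aleph0_le_continuum)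
  have hpick : ∀ p (S : Set C), ∃ f : T → C, #S < 𝔠 → BijOn f (sucSet p) Sᶜ := by
    intro p S
    by_cases hS : #S < 𝔠
    · obtain ⟨f, hf⟩ := exists_bijOn_compl_of_mk_lt (s := sucSet p)
        (by rw [hsuc, hC, lift_continuum, lift_continuum]) (hC ▸ hS)
      exact ⟨f, fun _ => hf⟩
    · exact ⟨fun _ => Classical.arbitrary C, fun h => absurd h hS⟩
  choose pick hpick using hpick
  -- `K q p` labels the edge `p ⋖ q`. Restricting to `x.2 < q` makes `Φ K q` depend only on
  -- `K` below `q`, and for `q ∈ sucSet p` it discards nothing from `LSet p`.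
  let Φ : (T → T → C) → T → T → C := fun K q p =>
    pick p ((fun x => K x.2 x.1) '' {x ∈ LSet p | x.2 < q}) q
  obtain ⟨K, hK⟩ := hwf.exists_isFixedPt Φ fun K K' q hKK' => funext fun p =>
    congrArg (pick p · q) (image_congr fun x hx => congrFun (hKK' x.2 hx.2) x.1)
  refine ⟨fun p q => K q p, fun p => ?_⟩
  have hbij : BijOn (fun q => K q p) (sucSet p) ((fun x => K x.2 x.1) '' LSet p)ᶜ := by
    refine (hpick p _ (mk_image_lt_continuum _ (hL p))).congr fun q hq => ?_
    have hKqp : pick p ((fun x => K x.2 x.1) '' {x ∈ LSet p | x.2 < q}) q = K q p :=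
      congrFun (congrFun hK q) p
    rwa [(sep_eq_self_iff_mem_true (s := LSet p)).mpr
      fun x hx => snd_lt_of_mem_LSet_of_mem_sucSet hx hq] at hKqp
  exact ⟨hbij.injOn, hbij.image_eq⟩
end

section
/- Let Q be a preorder, κ an ordinal, (q_ε)_{ε < κ} a family of elements of Q, P a preorder, and R : Q → P → Prop a relation satisfying: if R(q, r) and r ≤ r' then R(q, r'). For r ∈ P let (α_r, η_r) be the canonical sequence of r, i.e. the unique ordinal α_r and function η_r on {β : β < α_r} such that for every β < α_r, η_r(β) is the least ε < κ with R(q_ε, r) and q_ε incompatible with q_{η_r(γ)} for all γ < β, and no ε < κ satisfies this condition at stage α_r. Then for all r₁, r₂ ∈ P with r₁ ≤ r₂, either α_{r₁} ≤ α_{r₂} and η_{r₂} restricted to {β : β < α_{r₁}} equals η_{r₁}, or there exists β < min(α_{r₁}, α_{r₂}) such that η_{r₁} and η_{r₂} agree on {γ : γ < β} and η_{r₂}(β) < η_{r₁}(β). -/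
/-!
If `η₁` and `η₂` agree below `β`, then `η₁ β` is still a legal choice for `r₂` at stage `β`,
because `R` is upward closed in `P` and the incompatibility requirement only looks at values
below `β`. Hence the construction for `r₂` cannot stop before `β`, and its choice at `β` is at
most `η₁ β`. Applied at the first point of disagreement this gives the lexicographic decrease;
if there is none, applied at `α₂` it shows `α₁ ≤ α₂`.
-/

/-- `CanonSpec κ q R r α η` says that `(α, η)` is the canonical sequence of `r`
(⊛₁ in the proof of Claim 3.3): for each `β < α`, `η β` is the least `ε < κ`
such that `R (q ε) r` holds and `q ε` is incompatible with `q (η γ)` for all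
`γ < β`, and no `ε < κ` satisfies this condition at stage `α`. -/
def CanonSpec {Q P : Type*} [Preorder Q] (κ : Ordinal) (q : Ordinal → Q)
    (R : Q → P → Prop) (r : P) (α : Ordinal) (η : Ordinal → Ordinal) : Prop :=
  (∀ β : Ordinal, β < α →
    IsLeast {ε : Ordinal | ε < κ ∧ R (q ε) r ∧
      ∀ γ : Ordinal, γ < β → ¬∃ z, q ε ≤ z ∧ q (η γ) ≤ z} (η β)) ∧
  ¬∃ ε : Ordinal, ε < κ ∧ R (q ε) r ∧
      ∀ γ : Ordinal, γ < α → ¬∃ z, q ε ≤ z ∧ q (η γ) ≤ z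

section CanonicalSequence

variable {Q P : Type*} [Preorder Q] {κ : Ordinal} {q : Ordinal → Q}
  {R : Q → P → Prop}

def canonCandidates (κ : Ordinal) (q : Ordinal → Q) (R : Q → P → Prop) (r : P)
    (η : Ordinal → Ordinal) (β : Ordinal) : Set Ordinal :=
  {ε | ε < κ ∧ R (q ε) r ∧ ∀ γ : Ordinal, γ < β → ¬∃ z, q ε ≤ z ∧ q (η γ) ≤ z}

theorem canonCandidates_subset [Preorder P]
    (hmono : ∀ qq : Q, ∀ r r' : P, R qq r → r ≤ r' → R qq r')
    {r₁ r₂ : P} (hr : r₁ ≤ r₂) {η₁ η₂ : Ordinal → Ordinal} {β : Ordinal}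
    (heq : Set.EqOn η₁ η₂ (Set.Iio β)) :
    canonCandidates κ q R r₁ η₁ β ⊆ canonCandidates κ q R r₂ η₂ β := by
  rintro ε ⟨hκ, hR, hinc⟩
  refine ⟨hκ, hmono _ _ _ hR hr, fun γ hγ => ?_⟩
  rw [← heq hγ]
  exact hinc γ hγ

namespace CanonSpec

variable {r : P} {α : Ordinal} {η : Ordinal → Ordinal}

theorem isLeast (h : CanonSpec κ q R r α η) {β : Ordinal} (hβ : β < α) :
    IsLeast (canonCandidates κ q R r η β) (η β) :=
  h.1 β hβ

theorem notMem_canonCandidates (h : CanonSpec κ q R r α η) (ε : Ordinal) :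
    ε ∉ canonCandidates κ q R r η α :=
  fun hε => h.2 ⟨ε, hε⟩

theorem lt_and_le_of_eqOn [Preorder P]
    (hmono : ∀ qq : Q, ∀ r r' : P, R qq r → r ≤ r' → R qq r')
    {r₁ r₂ : P} (hr : r₁ ≤ r₂) {α₁ α₂ : Ordinal} {η₁ η₂ : Ordinal → Ordinal}
    (h₁ : CanonSpec κ q R r₁ α₁ η₁) (h₂ : CanonSpec κ q R r₂ α₂ η₂) {β : Ordinal}
    (hβ : β < α₁) (heq : Set.EqOn η₁ η₂ (Set.Iio β)) :
    β < α₂ ∧ η₂ β ≤ η₁ β := by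
  have hβ₂ : β < α₂ := by
    by_contra! hαβ
    have heq₂ : Set.EqOn η₁ η₂ (Set.Iio α₂) := heq.mono (Set.Iio_subset_Iio hαβ)
    exact h₂.notMem_canonCandidates (η₁ α₂)
      (canonCandidates_subset hmono hr heq₂ ((h₁.isLeast (hαβ.trans_lt hβ)).1))
  exact ⟨hβ₂, (h₂.isLeast hβ₂).2 (canonCandidates_subset hmono hr heq (h₁.isLeast hβ).1)⟩

end CanonSpec

end CanonicalSequence

/-- ⊛₃ in the proof of Claim 3.3: if `R` is monotone in its second argument and
`r₁ ≤ r₂`, then the canonical sequence of `r₂` either end-extends that of `r₁`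
or is lexicographically smaller at the first point of difference. -/
theorem stmt8 {Q P : Type*} [Preorder Q] [Preorder P] (κ : Ordinal)
    (q : Ordinal → Q) (R : Q → P → Prop)
    (hmono : ∀ qq : Q, ∀ r r' : P, R qq r → r ≤ r' → R qq r')
    (r₁ r₂ : P) (hr : r₁ ≤ r₂)
    (α₁ α₂ : Ordinal) (η₁ η₂ : Ordinal → Ordinal)
    (h₁ : CanonSpec κ q R r₁ α₁ η₁) (h₂ : CanonSpec κ q R r₂ α₂ η₂) :
    (α₁ ≤ α₂ ∧ ∀ β : Ordinal, β < α₁ → η₂ β = η₁ β) ∨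
    (∃ β : Ordinal, β < min α₁ α₂ ∧
      (∀ γ : Ordinal, γ < β → η₁ γ = η₂ γ) ∧ η₂ β < η₁ β) := by
  by_cases hdiff : ∃ β, β < α₁ ∧ η₁ β ≠ η₂ β
  · obtain ⟨β, ⟨hβ, hne⟩, hfirst⟩ := wellFounded_lt.has_min {β | β < α₁ ∧ η₁ β ≠ η₂ β} hdiff
    have heq : Set.EqOn η₁ η₂ (Set.Iio β) := fun γ hγ =>
      not_not.1 fun hne' => hfirst γ ⟨hγ.trans hβ, hne'⟩ hγ
    obtain ⟨hβ₂, hle⟩ := h₁.lt_and_le_of_eqOn hmono hr h₂ hβ heq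
    exact .inr ⟨β, lt_min hβ hβ₂, heq, hle.lt_of_ne' hne⟩
  · push Not at hdiff
    refine .inl ⟨le_of_not_gt fun hα => ?_, fun β hβ => (hdiff β hβ).symm⟩
    have heq : Set.EqOn η₁ η₂ (Set.Iio α₂) := fun γ hγ => hdiff γ (hγ.trans hα)
    exact (h₁.lt_and_le_of_eqOn hmono hr h₂ hα heq).1.false
end
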